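/- arXiv:2212.05151 — 2 statements merged into one kernel-verified Lean document; each statement's English description precedes it below -/
import Mathlib

section
/- (Kiefer–Weiss optimality, Proposition 4.1.) Let 0 ≤ θ_1 < θ_2 < … < θ_k ≤ 1 with k ≥ 2, let ϑ_i ∈ (θ_i, θ_{i+1}) and γ_i ≥ 0 for i = 1,…,k−1 with Σ_{i=1}^{k−1} γ_i = 1, let λ_{ij} ≥ 0 and α_{ij} > 0 for 1 ≤ i ≠ j ≤ k, and set C_{γ,ϑ}(ψ) = Σ_{i=1}^{k−1} γ_i E_{ϑ_i} τ_ψ. Suppose a sequential test ⟨ψ*,φ*⟩ satisfies: (i) its Lagrangian value C_{γ,ϑ}(ψ*) + Σ_{i≠j} λ_{ij} α_{ij}(ψ*,φ*) is finite and is less than or equal to C_{γ,ϑ}(ψ) + Σ_{i≠j} λ_{ij} α_{ij}(ψ,φ) for every sequential test ⟨ψ,φ⟩; (ii) α_{ij}(ψ*,φ*) = α_{ij} for all 1 ≤ i ≠ j ≤ k; and (iii) E_{ϑ_i} τ_{ψ*} = sup_{θ∈(θ_1,θ_k)} E_θ τ_{ψ*} for every i = 1,…,k−1. Then every sequential test ⟨ψ,φ⟩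 with α_{ij}(ψ,φ) ≤ α_{ij} for all 1 ≤ i ≠ j ≤ k satisfies sup_{θ∈(θ_1,θ_k)} E_θ τ_{ψ*} ≤ sup_{θ∈(θ_1,θ_k)} E_θ τ_ψ. -/
open scoped BigOperators ENNReal

/-- number of successes in the sample `x` -/
def count {n : ℕ} (x : Fin n → Bool) : ℕ := (Finset.univ.filter fun i => x i).card

/-- joint Bernoulli density `f_θ^n(x) = θ^{s_n(x)} (1-θ)^{n-s_n(x)}` -/
noncomputable def fpow (θ : ℝ) (n : ℕ) (x : Fin n → Bool) : ℝ :=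
  θ ^ count x * (1 - θ) ^ (n - count x)

/-- restriction of `x ∈ {0,1}^n` to its first `m` coordinates -/
def restrict {n : ℕ} (x : Fin n → Bool) (m : ℕ) : Fin m → Bool :=
  fun i => if h : i.val < n then x ⟨i.val, h⟩ else false

/-- `s_n^ψ(x) = [∏_{m=1}^{n−1}(1−ψ_m(x_1,…,x_m))]·ψ_n(x)` -/
noncomputable def sstop (ψ : (n : ℕ) → (Fin n → Bool) → ℝ) (n : ℕ) (x : Fin n → Bool) : ℝ :=
  (∏ m ∈ Finset.range (n - 1), (1 - ψ (m + 1) (restrict x (m + 1)))) * ψ n x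

/-- a stopping rule takes values in `[0,1]` -/
def IsStoppingRule (ψ : (n : ℕ) → (Fin n → Bool) → ℝ) : Prop :=
  ∀ n x, ψ n x ∈ Set.Icc (0 : ℝ) 1

/-- a decision rule for `k` hypotheses: components in `[0,1]` summing to `1` -/
def IsDecisionRule {k : ℕ} (φ : (n : ℕ) → (Fin n → Bool) → Fin k → ℝ) : Prop :=
  (∀ n x j, φ n x j ∈ Set.Icc (0 : ℝ) 1) ∧ ∀ n x, ∑ j, φ n x j = 1

/-- total stopping probability `Σ_{n=1}^∞ Σ_{x∈{0,1}^n} s_n^ψ(x) f_θ^n(x)` -/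
noncomputable def stopMass (θ : ℝ) (ψ : (n : ℕ) → (Fin n → Bool) → ℝ) : ℝ≥0∞ :=
  ∑' n : ℕ, ∑ x : Fin (n + 1) → Bool, ENNReal.ofReal (sstop ψ (n + 1) x * fpow θ (n + 1) x)

/-- the expected sample size (with values in `[0,∞]`):
`E_θ τ_ψ = Σ_{n=1}^∞ n Σ_{x∈{0,1}^n} s_n^ψ(x) f_θ^n(x)` if
`Σ_{n=1}^∞ Σ_{x∈{0,1}^n} s_n^ψ(x) f_θ^n(x) = 1`, and `E_θ τ_ψ = +∞` otherwise. -/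
noncomputable def Etau (θ : ℝ) (ψ : (n : ℕ) → (Fin n → Bool) → ℝ) : ℝ≥0∞ :=
  if stopMass θ ψ = 1 then
    ∑' n : ℕ, ((n : ℝ≥0∞) + 1) *
      ∑ x : Fin (n + 1) → Bool, ENNReal.ofReal (sstop ψ (n + 1) x * fpow θ (n + 1) x)
  else ⊤

/-- error probability `α_{ij}(ψ,φ) = Σ_{n=1}^∞ Σ_{x∈{0,1}^n} s_n^ψ(x) φ_n^j(x) f_{θ_i}^n(x)` -/
noncomputable def errProb {k : ℕ} (θs : Fin k → ℝ) (ψ : (n : ℕ) → (Fin n → Bool) → ℝ)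
    (φ : (n : ℕ) → (Fin n → Bool) → Fin k → ℝ) (i j : Fin k) : ℝ :=
  ∑' n : ℕ, ∑ x : Fin (n + 1) → Bool, sstop ψ (n + 1) x * φ (n + 1) x j * fpow (θs i) (n + 1) x

/-- the Lagrangian value `C_{γ,ϑ}(ψ) + Σ_{i≠j} λ_{ij} α_{ij}(ψ,φ)` where
`C_{γ,ϑ}(ψ) = Σ_{i=1}^{k−1} γ_i E_{ϑ_i} τ_ψ` (with values in `[0,∞]`). -/
noncomputable def Lagr {k : ℕ} (θs : Fin k → ℝ) (ϑ γ : Fin (k - 1) → ℝ)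
    (lam : Fin k → Fin k → ℝ) (ψ : (n : ℕ) → (Fin n → Bool) → ℝ)
    (φ : (n : ℕ) → (Fin n → Bool) → Fin k → ℝ) : ℝ≥0∞ :=
  (∑ i : Fin (k - 1), ENNReal.ofReal (γ i) * Etau (ϑ i) ψ) +
    ∑ i : Fin k, ∑ j ∈ Finset.univ.filter (· ≠ i),
      ENNReal.ofReal (lam i j * errProb θs ψ φ i j)


/-!
The Lagrangian of `⟨ψ*,φ*⟩` is at most that of any competitor `⟨ψ,φ⟩`; since the competitor's
error probabilities are at most those attained by `⟨ψ*,φ*⟩` and the multipliers are nonnegative,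
the (finite) error penalties can be cancelled, leaving `C_{γ,ϑ}(ψ*) ≤ C_{γ,ϑ}(ψ)`. As the `γ_i` are
probability weights, `C_{γ,ϑ}(ψ*)` equals the supremum of `E_θ τ_{ψ*}` by (iii), while `C_{γ,ϑ}(ψ)`
is an average of values of `E_θ τ_ψ` at points of `(θ_1,θ_k)`, hence at most their supremum.
-/

section Weights

variable {ι : Type*} {s : Finset ι} {w : ι → ℝ}

theorem sum_ofReal_eq_one (hw0 : ∀ i ∈ s, 0 ≤ w i) (hw1 : ∑ i ∈ s, w i = 1) :
    ∑ i ∈ s, ENNReal.ofReal (w i) = 1 := by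
  rw [← ENNReal.ofReal_sum_of_nonneg hw0, hw1, ENNReal.ofReal_one]

theorem sum_ofReal_mul_const (hw0 : ∀ i ∈ s, 0 ≤ w i) (hw1 : ∑ i ∈ s, w i = 1) (M : ℝ≥0∞) :
    ∑ i ∈ s, ENNReal.ofReal (w i) * M = M := by
  rw [← Finset.sum_mul, sum_ofReal_eq_one hw0 hw1, one_mul]

theorem sum_ofReal_mul_le (hw0 : ∀ i ∈ s, 0 ≤ w i) (hw1 : ∑ i ∈ s, w i = 1)
    {f : ι → ℝ≥0∞} {M : ℝ≥0∞} (hf : ∀ i ∈ s, f i ≤ M) :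
    ∑ i ∈ s, ENNReal.ofReal (w i) * f i ≤ M :=
  calc ∑ i ∈ s, ENNReal.ofReal (w i) * f i
      ≤ ∑ i ∈ s, ENNReal.ofReal (w i) * M := Finset.sum_le_sum fun i hi => by gcongr; exact hf i hi
    _ = M := sum_ofReal_mul_const hw0 hw1 M

end Weights

/-- The cost `C_{γ,ϑ}(ψ)` of the paper. -/
noncomputable def weightedEtau {m : ℕ} (ϑ γ : Fin m → ℝ) (ψ : (n : ℕ) → (Fin n → Bool) → ℝ) :
    ℝ≥0∞ :=
  ∑ i, ENNReal.ofReal (γ i) * Etau (ϑ i) ψ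

noncomputable def errPenalty {k : ℕ} (lam α : Fin k → Fin k → ℝ) : ℝ≥0∞ :=
  ∑ i : Fin k, ∑ j ∈ Finset.univ.filter (· ≠ i), ENNReal.ofReal (lam i j * α i j)

theorem Lagr_eq {k : ℕ} (θs : Fin k → ℝ) (ϑ γ : Fin (k - 1) → ℝ) (lam : Fin k → Fin k → ℝ)
    (ψ : (n : ℕ) → (Fin n → Bool) → ℝ) (φ : (n : ℕ) → (Fin n → Bool) → Fin k → ℝ) :
    Lagr θs ϑ γ lam ψ φ = weightedEtau ϑ γ ψ + errPenalty lam (errProb θs ψ φ) :=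
  rfl

theorem errPenalty_ne_top {k : ℕ} (lam α : Fin k → Fin k → ℝ) : errPenalty lam α ≠ ⊤ :=
  ENNReal.sum_ne_top.mpr fun _ _ => ENNReal.sum_ne_top.mpr fun _ _ => ENNReal.ofReal_ne_top

theorem errPenalty_mono {k : ℕ} {lam α β : Fin k → Fin k → ℝ} (hlam : ∀ i j, 0 ≤ lam i j)
    (hαβ : ∀ i j, i ≠ j → α i j ≤ β i j) : errPenalty lam α ≤ errPenalty lam β :=
  Finset.sum_le_sum fun i _ => Finset.sum_le_sum fun j hj =>
    ENNReal.ofReal_le_ofReal <|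
      mul_le_mul_of_nonneg_left (hαβ i j (Finset.mem_filter.mp hj).2.symm) (hlam i j)

theorem weightedEtau_le_of_Lagr_le {k : ℕ} {θs : Fin k → ℝ} {ϑ γ : Fin (k - 1) → ℝ}
    {lam : Fin k → Fin k → ℝ} (hlam : ∀ i j, 0 ≤ lam i j)
    {ψ₁ ψ₂ : (n : ℕ) → (Fin n → Bool) → ℝ} {φ₁ φ₂ : (n : ℕ) → (Fin n → Bool) → Fin k → ℝ}
    (hL : Lagr θs ϑ γ lam ψ₁ φ₁ ≤ Lagr θs ϑ γ lam ψ₂ φ₂)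
    (herr : ∀ i j, i ≠ j → errProb θs ψ₂ φ₂ i j ≤ errProb θs ψ₁ φ₁ i j) :
    weightedEtau ϑ γ ψ₁ ≤ weightedEtau ϑ γ ψ₂ := by
  rw [Lagr_eq, Lagr_eq] at hL
  refine (ENNReal.add_le_add_iff_right (errPenalty_ne_top lam (errProb θs ψ₁ φ₁))).mp ?_
  exact hL.trans (add_le_add_right (errPenalty_mono hlam herr) _)

/-- **Proposition 4.1 (Kiefer–Weiss optimality)**: if the test `⟨ψ*,φ*⟩` (i) minimizes
the Lagrangian (with finite value), (ii) attains the error probabilities `α_{ij}`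
exactly, and (iii) has its ESS at each `ϑ_i` equal to `sup_{θ∈(θ_1,θ_k)} E_θ τ_{ψ*}`,
then it minimizes `sup_{θ∈(θ_1,θ_k)} E_θ τ_ψ` among all tests with
`α_{ij}(ψ,φ) ≤ α_{ij}`. -/
theorem stmt6 (k : ℕ) (hk : 2 ≤ k) (θs : Fin k → ℝ)
    (hmono : StrictMono θs)
    (ϑ γ : Fin (k - 1) → ℝ)
    (hϑ : ∀ i : Fin (k - 1),
      θs ⟨i.val, by have := i.isLt; omega⟩ < ϑ i ∧
        ϑ i < θs ⟨i.val + 1, by have := i.isLt; omega⟩)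
    (hγ0 : ∀ i, 0 ≤ γ i) (hγ1 : ∑ i, γ i = 1)
    (lam : Fin k → Fin k → ℝ) (hlam : ∀ i j, 0 ≤ lam i j)
    (αb : Fin k → Fin k → ℝ)
    (ψs : (n : ℕ) → (Fin n → Bool) → ℝ) (φs : (n : ℕ) → (Fin n → Bool) → Fin k → ℝ)
    -- (i) the Lagrangian value of ⟨ψ*,φ*⟩ is finite and minimal:
    (hmin : ∀ ψ φ, IsStoppingRule ψ → IsDecisionRule φ →
      Lagr θs ϑ γ lam ψs φs ≤ Lagr θs ϑ γ lam ψ φ)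
    -- (ii) the error probabilities are attained exactly:
    (hattain : ∀ i j, i ≠ j → errProb θs ψs φs i j = αb i j)
    -- (iii) the ESS at each ϑ_i equals the supremum over (θ_1, θ_k):
    (hsup : ∀ i : Fin (k - 1),
      Etau (ϑ i) ψs = ⨆ θ ∈ Set.Ioo (θs ⟨0, by omega⟩) (θs ⟨k - 1, by omega⟩), Etau θ ψs)
    -- an arbitrary competing test satisfying the error-probability restrictions:
    (ψ : (n : ℕ) → (Fin n → Bool) → ℝ) (φ : (n : ℕ) → (Fin n → Bool) → Fin k → ℝ)
    (hψ : IsStoppingRule ψ) (hφ : IsDecisionRule φ)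
    (hcon : ∀ i j, i ≠ j → errProb θs ψ φ i j ≤ αb i j) :
    (⨆ θ ∈ Set.Ioo (θs ⟨0, by omega⟩) (θs ⟨k - 1, by omega⟩), Etau θ ψs) ≤
      ⨆ θ ∈ Set.Ioo (θs ⟨0, by omega⟩) (θs ⟨k - 1, by omega⟩), Etau θ ψ := by
  have hmem : ∀ i : Fin (k - 1), ϑ i ∈ Set.Ioo (θs ⟨0, by omega⟩) (θs ⟨k - 1, by omega⟩) :=
    fun i => ⟨(hmono.monotone (Fin.mk_le_mk.mpr (Nat.zero_le _))).trans_lt (hϑ i).1,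
      (hϑ i).2.trans_le (hmono.monotone (Fin.mk_le_mk.mpr (by omega)))⟩
  calc (⨆ θ ∈ Set.Ioo (θs ⟨0, by omega⟩) (θs ⟨k - 1, by omega⟩), Etau θ ψs)
      = weightedEtau ϑ γ ψs := by
        simp only [weightedEtau, hsup, sum_ofReal_mul_const (fun i _ => hγ0 i) hγ1]
    _ ≤ weightedEtau ϑ γ ψ :=
        weightedEtau_le_of_Lagr_le hlam (hmin ψ φ hψ hφ) fun i j hij =>
          (hcon i j hij).trans_eq (hattain i j hij).symm
    _ ≤ ⨆ θ ∈ Set.Ioo (θs ⟨0, by omega⟩) (θs ⟨k - 1, by omega⟩), Etau θ ψ :=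
        sum_ofReal_mul_le (fun i _ => hγ0 i) hγ1 fun i _ =>
          le_iSup₂ (f := fun θ _ => Etau θ ψ) (ϑ i) (hmem i)
end

section
/- (Optimality of the decision rule, Bernoulli instance of equation (2-1).) Let ψ be any stopping rule. For every decision rule φ, Σ_{1≤i≠j≤k} λ_{ij} α_{ij}(ψ,φ) ≥ Σ_{n=1}^∞ Σ_{x∈{0,1}^n} s_n^ψ(x) v_n(x) (sums with values in [0,∞]). Moreover, if φ satisfies φ_n^j(x) = 0 whenever Σ_{i≠j} λ_{ij} f_{θ_i}^n(x) > v_n(x) (for all n, x, j), then equality holds. -/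
/-!
Exchanging the order of summation turns `Σ_{i≠j} λ_{ij} α_{ij}(ψ,φ)` into
`Σ_n Σ_x s_n^ψ(x) Σ_j φ_n^j(x) L_j(x)` with `L_j = Σ_{i≠j} λ_{ij} f_{θ_i}^n`. Since `φ_n(x)` is a
probability vector, the inner sum is a convex combination of the `L_j`, hence at least their
minimum `v_n(x)`, with equality when `φ_n(x)` is supported on the minimisers.
-/

open scoped BigOperators ENNReal

/-- `v_n(x) = min_{1≤j≤k} Σ_{i≠j} λ_{ij} f_{θ_i}^n(x)` -/
noncomputable def vfun (k : ℕ) (θs : Fin k → ℝ) (lam : Fin k → Fin k → ℝ)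
    (n : ℕ) (x : Fin n → Bool) : ℝ :=
  ⨅ j : Fin k, ∑ i ∈ Finset.univ.filter (· ≠ j), lam i j * fpow (θs i) n x

open Finset

noncomputable def decisionLoss (k : ℕ) (θs : Fin k → ℝ) (lam : Fin k → Fin k → ℝ)
    (n : ℕ) (x : Fin n → Bool) (j : Fin k) : ℝ :=
  ∑ i ∈ univ.filter (· ≠ j), lam i j * fpow (θs i) n x

lemma fpow_nonneg {θ : ℝ} (hθ : θ ∈ Set.Icc (0 : ℝ) 1) (n : ℕ) (x : Fin n → Bool) :
    0 ≤ fpow θ n x :=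
  mul_nonneg (pow_nonneg hθ.1 _) (pow_nonneg (sub_nonneg.2 hθ.2) _)

lemma sstop_nonneg {ψ : (n : ℕ) → (Fin n → Bool) → ℝ}
    (hψ : ∀ n x, ψ n x ∈ Set.Icc (0 : ℝ) 1) (n : ℕ) (x : Fin n → Bool) :
    0 ≤ sstop ψ n x :=
  mul_nonneg (prod_nonneg fun _ _ => sub_nonneg.2 (hψ _ _).2) (hψ n x).1

lemma ciInf_le_sum_mul {ι : Type*} [Fintype ι] {w b : ι → ℝ} (hw : ∀ j, 0 ≤ w j)
    (hw₁ : ∑ j, w j = 1) : ⨅ i, b i ≤ ∑ j, w j * b j :=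
  calc ⨅ i, b i = ∑ j, w j * ⨅ i, b i := by rw [← sum_mul, hw₁, one_mul]
    _ ≤ ∑ j, w j * b j :=
      sum_le_sum fun j _ => mul_le_mul_of_nonneg_left (ciInf_le (Finite.bddBelow_range b) j) (hw j)

lemma sum_mul_eq_ciInf {ι : Type*} [Fintype ι] {w b : ι → ℝ} (hw₁ : ∑ j, w j = 1)
    (hw : ∀ j, ⨅ i, b i < b j → w j = 0) : ∑ j, w j * b j = ⨅ i, b i := by
  calc ∑ j, w j * b j = ∑ j, w j * ⨅ i, b i := by
        refine sum_congr rfl fun j _ => ?_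
        rcases (ciInf_le (Finite.bddBelow_range b) j).lt_or_eq with h | h
        · rw [hw j h, zero_mul, zero_mul]
        · rw [h]
    _ = ⨅ i, b i := by rw [← sum_mul, hw₁, one_mul]

lemma sum_sum_filter_ne_comm {α M : Type*} [Fintype α] [DecidableEq α] [AddCommMonoid M]
    (g : α → α → M) :
    ∑ i, ∑ j ∈ univ.filter (· ≠ i), g i j = ∑ j, ∑ i ∈ univ.filter (· ≠ j), g i j :=
  sum_comm' fun i j => by simp [ne_comm]

lemma ENNReal.sum_tsum_sum_ofReal {ι : Type*} (s : Finset ι) {X : ℕ → Type*}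
    [∀ n, Fintype (X n)] {a : ι → (n : ℕ) → X n → ℝ} (ha : ∀ t ∈ s, ∀ n x, 0 ≤ a t n x) :
    ∑ t ∈ s, ∑' n, ∑ x, ENNReal.ofReal (a t n x) =
      ∑' n, ∑ x, ENNReal.ofReal (∑ t ∈ s, a t n x) := by
  rw [← Summable.tsum_finsetSum fun _ _ => ENNReal.summable]
  refine tsum_congr fun n => ?_
  rw [sum_comm]
  exact sum_congr rfl fun x _ => (ENNReal.ofReal_sum_of_nonneg fun t ht => ha t ht n x).symm

lemma ENNReal.ofReal_mul_tsum_sum_ofReal {X : ℕ → Type*} [∀ n, Fintype (X n)] {c : ℝ}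
    (hc : 0 ≤ c) (a : (n : ℕ) → X n → ℝ) :
    ENNReal.ofReal c * ∑' n, ∑ x, ENNReal.ofReal (a n x) =
      ∑' n, ∑ x, ENNReal.ofReal (c * a n x) := by
  simp only [← ENNReal.tsum_mul_left, mul_sum, ENNReal.ofReal_mul hc]

lemma sum_weighted_errors_eq_tsum_decisionLoss (k : ℕ) (θs : Fin k → ℝ)
    (hθ : ∀ i, θs i ∈ Set.Icc (0 : ℝ) 1)
    (lam : Fin k → Fin k → ℝ) (hlam : ∀ i j, 0 ≤ lam i j)
    (ψ : (n : ℕ) → (Fin n → Bool) → ℝ) (hψ : ∀ n x, ψ n x ∈ Set.Icc (0 : ℝ) 1)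
    (φ : (n : ℕ) → (Fin n → Bool) → Fin k → ℝ) (hφ : ∀ n x j, 0 ≤ φ n x j) :
    ∑ i : Fin k, ∑ j ∈ univ.filter (· ≠ i),
        ENNReal.ofReal (lam i j) *
          ∑' n : ℕ, ∑ x : Fin (n + 1) → Bool,
            ENNReal.ofReal (sstop ψ (n + 1) x * φ (n + 1) x j * fpow (θs i) (n + 1) x) =
      ∑' n : ℕ, ∑ x : Fin (n + 1) → Bool,
        ENNReal.ofReal
          (sstop ψ (n + 1) x * ∑ j, φ (n + 1) x j * decisionLoss k θs lam (n + 1) x j) := by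
  have hterm : ∀ i j n (x : Fin n → Bool),
      0 ≤ lam i j * (sstop ψ n x * φ n x j * fpow (θs i) n x) := fun i j n x =>
    mul_nonneg (hlam i j)
      (mul_nonneg (mul_nonneg (sstop_nonneg hψ n x) (hφ n x j)) (fpow_nonneg (hθ i) n x))
  simp only [ENNReal.ofReal_mul_tsum_sum_ofReal (hlam _ _)]
  simp only [ENNReal.sum_tsum_sum_ofReal _ fun _ _ _ _ => hterm _ _ _ _]
  rw [ENNReal.sum_tsum_sum_ofReal _ fun _ _ _ _ =>
    sum_nonneg fun _ _ => hterm _ _ _ _]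
  refine tsum_congr fun n => sum_congr rfl fun x _ => congrArg ENNReal.ofReal ?_
  rw [sum_sum_filter_ne_comm, mul_sum]
  refine sum_congr rfl fun j _ => ?_
  simp only [decisionLoss, mul_sum]
  exact sum_congr rfl fun i _ => by ring

theorem stmt13_general (k : ℕ) (θs : Fin k → ℝ)
    (hθ : ∀ i, θs i ∈ Set.Icc (0 : ℝ) 1)
    (lam : Fin k → Fin k → ℝ) (hlam : ∀ i j, 0 ≤ lam i j)
    (ψ : (n : ℕ) → (Fin n → Bool) → ℝ) (hψ : ∀ n x, ψ n x ∈ Set.Icc (0 : ℝ) 1)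
    (φ : (n : ℕ) → (Fin n → Bool) → Fin k → ℝ)
    (hφ : ∀ n x j, φ n x j ∈ Set.Icc (0 : ℝ) 1)
    (hφsum : ∀ n x, ∑ j, φ n x j = 1) :
    (∑' n : ℕ, ∑ x : Fin (n + 1) → Bool,
        ENNReal.ofReal (sstop ψ (n + 1) x * vfun k θs lam (n + 1) x)) ≤
      (∑ i : Fin k, ∑ j ∈ Finset.univ.filter (· ≠ i),
        ENNReal.ofReal (lam i j) *
          ∑' n : ℕ, ∑ x : Fin (n + 1) → Bool,
            ENNReal.ofReal (sstop ψ (n + 1) x * φ (n + 1) x j * fpow (θs i) (n + 1) x)) ∧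
    ((∀ n : ℕ, ∀ x : Fin n → Bool, ∀ j : Fin k,
        vfun k θs lam n x < ∑ i ∈ Finset.univ.filter (· ≠ j), lam i j * fpow (θs i) n x →
          φ n x j = 0) →
      (∑ i : Fin k, ∑ j ∈ Finset.univ.filter (· ≠ i),
        ENNReal.ofReal (lam i j) *
          ∑' n : ℕ, ∑ x : Fin (n + 1) → Bool,
            ENNReal.ofReal (sstop ψ (n + 1) x * φ (n + 1) x j * fpow (θs i) (n + 1) x)) =
        ∑' n : ℕ, ∑ x : Fin (n + 1) → Bool,
          ENNReal.ofReal (sstop ψ (n + 1) x * vfun k θs lam (n + 1) x)) := by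
  rw [sum_weighted_errors_eq_tsum_decisionLoss k θs hθ lam hlam ψ hψ φ fun n x j => (hφ n x j).1]
  refine ⟨ENNReal.tsum_le_tsum fun n => sum_le_sum fun x _ => ENNReal.ofReal_le_ofReal ?_,
    fun hopt => tsum_congr fun n => sum_congr rfl fun x _ => ?_⟩
  · exact mul_le_mul_of_nonneg_left
      (ciInf_le_sum_mul (fun j => (hφ _ x j).1) (hφsum _ x)) (sstop_nonneg hψ _ x)
  · rw [vfun, ← sum_mul_eq_ciInf (hφsum _ x) (hopt _ x)]
    rfl

/-- **Optimality of the decision rule (Bernoulli instance of equation (2-1))**: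
for any stopping rule `ψ` and any decision rule `φ`,
`Σ_{1≤i≠j≤k} λ_{ij} α_{ij}(ψ,φ) ≥ Σ_{n=1}^∞ Σ_{x∈{0,1}^n} s_n^ψ(x) v_n(x)`
(sums with values in `[0,∞]`), with equality whenever `φ_n^j(x) = 0` at every point
where `Σ_{i≠j} λ_{ij} f_{θ_i}^n(x) > v_n(x)`. -/
theorem stmt13 (k : ℕ) (hk : 2 ≤ k) (θs : Fin k → ℝ)
    (hθ : ∀ i, θs i ∈ Set.Icc (0 : ℝ) 1)
    (lam : Fin k → Fin k → ℝ) (hlam : ∀ i j, 0 ≤ lam i j)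
    (ψ : (n : ℕ) → (Fin n → Bool) → ℝ) (hψ : ∀ n x, ψ n x ∈ Set.Icc (0 : ℝ) 1)
    (φ : (n : ℕ) → (Fin n → Bool) → Fin k → ℝ)
    (hφ : ∀ n x j, φ n x j ∈ Set.Icc (0 : ℝ) 1)
    (hφsum : ∀ n x, ∑ j, φ n x j = 1) :
    (∑' n : ℕ, ∑ x : Fin (n + 1) → Bool,
        ENNReal.ofReal (sstop ψ (n + 1) x * vfun k θs lam (n + 1) x)) ≤
      (∑ i : Fin k, ∑ j ∈ Finset.univ.filter (· ≠ i),
        ENNReal.ofReal (lam i j) *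
          ∑' n : ℕ, ∑ x : Fin (n + 1) → Bool,
            ENNReal.ofReal (sstop ψ (n + 1) x * φ (n + 1) x j * fpow (θs i) (n + 1) x)) ∧
    ((∀ n : ℕ, ∀ x : Fin n → Bool, ∀ j : Fin k,
        vfun k θs lam n x < ∑ i ∈ Finset.univ.filter (· ≠ j), lam i j * fpow (θs i) n x →
          φ n x j = 0) →
      (∑ i : Fin k, ∑ j ∈ Finset.univ.filter (· ≠ i),
        ENNReal.ofReal (lam i j) *
          ∑' n : ℕ, ∑ x : Fin (n + 1) → Bool,
            ENNReal.ofReal (sstop ψ (n + 1) x * φ (n + 1) x j * fpow (θs i) (n + 1) x)) =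
        ∑' n : ℕ, ∑ x : Fin (n + 1) → Bool,
          ENNReal.ofReal (sstop ψ (n + 1) x * vfun k θs lam (n + 1) x)) :=
  stmt13_general k θs hθ lam hlam ψ hψ φ hφ hφsum
end
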